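/- For all NAA S₁, S₂, S₃ over Σ: ⟦S₁ ∧ S₂⟧ = ⟦S₁⟧ ∩ ⟦S₂⟧, and moreover S₁ ≤ₘ S₂ ∧ S₃ if and only if S₁ ≤ₘ S₂ and S₁ ≤ₘ S₃, where the conjunction of NAA (S₁, S⁰₁, Tran₁) and (S₂, S⁰₂, Tran₂) is S₁ ∧ S₂ = (S₁ × S₂, S⁰₁ × S⁰₂, Tran) with Tran((s₁, s₂)) = { M ⊆ Σ × S₁ × S₂ | π₁(M) ∈ Tran₁(s₁), π₂(M) ∈ Tran₂(s₂) }, π₁(M) = {(a, s₁) | ∃s₂: (a, s₁, s₂) ∈ M} and π₂(M) = {(a, s₂) | ∃s₁: (a, s₁, s₂) ∈ M}. -/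

import Mathlib

/-!
The projections are refinements `S₂ ∧ S₃ ≤ₘ S₂` and `S₂ ∧ S₃ ≤ₘ S₃`, so one direction is
transitivity of `≤ₘ`. Conversely, refinements `R₂ : S₁ ≤ₘ S₂` and `R₃ : S₁ ≤ₘ S₃` combine into
`{(s, (t, u)) | s R₂ t ∧ s R₃ u}`, which answers a move set of `S₁` by pairing the answers of
`S₂` and `S₃` to each common move. The statement about implementations is the case where the
left side is an LTS.
-/

/-- A labelled transition system over alphabet `A`, with an image-finite
transition relation. -/
structure LTS (A : Type) : Type 1 where
  State : Type
  init : State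
  trans : State → A → Set State
  image_finite : ∀ s a, (trans s a).Finite
/-- A nondeterministic acceptance automaton over alphabet `A`. -/
structure NAA (A : Type) : Type 1 where
  State : Type
  init : Set State
  Tran : State → Set (Set (A × State))

namespace NAA

variable {A : Type}

/-- Modal refinement relation between two NAA. -/
def Refinement (S1 S2 : NAA A) (R : Set (S1.State × S2.State)) : Prop :=
  ∀ p ∈ R, ∀ M1 ∈ S1.Tran p.1, ∃ M2 ∈ S2.Tran p.2,
    (∀ q ∈ M1, ∃ r ∈ M2, q.1 = r.1 ∧ (q.2, r.2) ∈ R) ∧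
    (∀ r ∈ M2, ∃ q ∈ M1, q.1 = r.1 ∧ (q.2, r.2) ∈ R)

/-- `S1 ≤ₘ S2`: there is an initialised modal refinement from `S1` to `S2`. -/
def Refines (S1 S2 : NAA A) : Prop :=
  ∃ R, Refinement S1 S2 R ∧ ∀ s ∈ S1.init, ∃ t ∈ S2.init, (s, t) ∈ R

/-- `S1 ≡ₘ S2`: modal refinement in both directions. -/
def Equiv (S1 S2 : NAA A) : Prop := Refines S1 S2 ∧ Refines S2 S1

/-- The defining finiteness conditions of NAA: the set of initial states is
finite and every admissible transition set is a finite subset of `A × State`. -/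
def Wellformed (S : NAA A) : Prop :=
  S.init.Finite ∧ ∀ s, ∀ M ∈ S.Tran s, M.Finite

end NAA
/-- An (image-finite) LTS viewed as an NAA: a singleton set of initial states and
a single admissible transition set per state. -/
def LTS.toNAA {A : Type} (I : LTS A) : NAA A where
  State := I.State
  init := {I.init}
  Tran := fun s => {M | M = {p : A × I.State | p.2 ∈ I.trans s p.1}}

/-- The implementations (LTS models) of an NAA. -/
def NAA.impl {A : Type} (S : NAA A) : Set (LTS A) := {I | I.toNAA.Refines S}

/-- Projection of a set of triples `(a, s1, s2)` to the pairs `(a, s1)`. -/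
def NAA.pi1 {A S1 S2 : Type} (M : Set (A × (S1 × S2))) : Set (A × S1) :=
  {q | ∃ s2, (q.1, (q.2, s2)) ∈ M}

/-- Projection of a set of triples `(a, s1, s2)` to the pairs `(a, s2)`. -/
def NAA.pi2 {A S1 S2 : Type} (M : Set (A × (S1 × S2))) : Set (A × S2) :=
  {q | ∃ s1, (q.1, (s1, q.2)) ∈ M}

/-- Conjunction of two NAA: the admissible transition sets over the product of
the state spaces are those whose two projections are admissible. -/
def NAA.conj {A : Type} (S1 S2 : NAA A) : NAA A where
  State := S1.State × S2.State
  init := S1.init ×ˢ S2.init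
  Tran := fun s => {M | M.Finite ∧ NAA.pi1 M ∈ S1.Tran s.1 ∧ NAA.pi2 M ∈ S2.Tran s.2}

namespace NAA

open SetRel

section Matching

variable {A α β γ : Type}

def Matched (R : Set (α × β)) (M1 : Set (A × α)) (M2 : Set (A × β)) : Prop :=
  (∀ q ∈ M1, ∃ r ∈ M2, q.1 = r.1 ∧ (q.2, r.2) ∈ R) ∧
  (∀ r ∈ M2, ∃ q ∈ M1, q.1 = r.1 ∧ (q.2, r.2) ∈ R)

lemma Matched.comp {R : Set (α × β)} {Q : Set (β × γ)} {M1 : Set (A × α)} {M2 : Set (A × β)}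
    {M3 : Set (A × γ)} (h12 : Matched R M1 M2) (h23 : Matched Q M2 M3) :
    Matched (R ○ Q) M1 M3 := by
  constructor
  · intro q hq
    obtain ⟨r, hr, hqr, hqrR⟩ := h12.1 q hq
    obtain ⟨r', hr', hrr', hrr'Q⟩ := h23.1 r hr
    exact ⟨r', hr', hqr.trans hrr', r.2, hqrR, hrr'Q⟩
  · intro r hr
    obtain ⟨q, hq, hqr, hqrQ⟩ := h23.2 r hr
    obtain ⟨q', hq', hq'q, hq'qR⟩ := h12.2 q hq
    exact ⟨q', hq', hq'q.trans hqr, q.2, hq'qR, hqrQ⟩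

/-- The transition set of the conjunction that answers `M1` when `M2` and `M3` answer it along
`R2` and `R3`: it pairs answers to a common move of `M1`. -/
def syncProd (R2 : Set (α × β)) (R3 : Set (α × γ)) (M1 : Set (A × α)) (M2 : Set (A × β))
    (M3 : Set (A × γ)) : Set (A × (β × γ)) :=
  {q | ∃ s, (q.1, s) ∈ M1 ∧ (q.1, q.2.1) ∈ M2 ∧ (s, q.2.1) ∈ R2 ∧
    (q.1, q.2.2) ∈ M3 ∧ (s, q.2.2) ∈ R3}

variable {R2 : Set (α × β)} {R3 : Set (α × γ)} {M1 : Set (A × α)} {M2 : Set (A × β)}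
  {M3 : Set (A × γ)}

lemma pi1_syncProd (h2 : Matched R2 M1 M2) (h3 : Matched R3 M1 M3) :
    pi1 (syncProd R2 R3 M1 M2 M3) = M2 := by
  ext ⟨a, t⟩
  constructor
  · rintro ⟨u, s, -, ht, -⟩
    exact ht
  · intro ht
    obtain ⟨⟨_, s⟩, hs, rfl, hst⟩ := h2.2 (a, t) ht
    obtain ⟨⟨_, u⟩, hu, rfl, hsu⟩ := h3.1 _ hs
    exact ⟨u, s, hs, ht, hst, hu, hsu⟩

lemma pi2_syncProd (h2 : Matched R2 M1 M2) (h3 : Matched R3 M1 M3) :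
    pi2 (syncProd R2 R3 M1 M2 M3) = M3 := by
  ext ⟨a, u⟩
  constructor
  · rintro ⟨t, s, -, -, -, hu, -⟩
    exact hu
  · intro hu
    obtain ⟨⟨_, s⟩, hs, rfl, hsu⟩ := h3.2 (a, u) hu
    obtain ⟨⟨_, t⟩, ht, rfl, hst⟩ := h2.1 _ hs
    exact ⟨t, s, hs, ht, hst, hu, hsu⟩

lemma matched_syncProd (h2 : Matched R2 M1 M2) (h3 : Matched R3 M1 M3) :
    Matched {p | (p.1, p.2.1) ∈ R2 ∧ (p.1, p.2.2) ∈ R3} M1 (syncProd R2 R3 M1 M2 M3) := by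
  constructor
  · rintro ⟨a, s⟩ hs
    obtain ⟨⟨_, t⟩, ht, rfl, hst⟩ := h2.1 _ hs
    obtain ⟨⟨_, u⟩, hu, rfl, hsu⟩ := h3.1 _ hs
    exact ⟨(a, (t, u)), ⟨s, hs, ht, hst, hu, hsu⟩, rfl, hst, hsu⟩
  · rintro ⟨a, t, u⟩ ⟨s, hs, -, hst, -, hsu⟩
    exact ⟨(a, s), hs, rfl, hst, hsu⟩

lemma syncProd_finite (h2 : M2.Finite) (h3 : M3.Finite) :
    (syncProd R2 R3 M1 M2 M3).Finite := by
  refine ((h2.prod h3).image fun p => (p.1.1, (p.1.2, p.2.2))).subset ?_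
  rintro ⟨a, t, u⟩ ⟨s, -, ht, -, hu, -⟩
  exact ⟨((a, t), (a, u)), ⟨ht, hu⟩, rfl⟩

end Matching

variable {A : Type}

lemma Refinement.comp {T1 T2 T3 : NAA A} {R : Set (T1.State × T2.State)}
    {Q : Set (T2.State × T3.State)} (hR : Refinement T1 T2 R) (hQ : Refinement T2 T3 Q) :
    Refinement T1 T3 (R ○ Q) := by
  rintro ⟨s1, s3⟩ ⟨s2, h12, h23⟩ M1 hM1
  obtain ⟨M2, hM2, hm12⟩ := hR (s1, s2) h12 M1 hM1
  obtain ⟨M3, hM3, hm23⟩ := hQ (s2, s3) h23 M2 hM2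
  exact ⟨M3, hM3, Matched.comp hm12 hm23⟩

lemma Refines.trans {T1 T2 T3 : NAA A} (h12 : T1.Refines T2) (h23 : T2.Refines T3) :
    T1.Refines T3 := by
  obtain ⟨R, hR, hRinit⟩ := h12
  obtain ⟨Q, hQ, hQinit⟩ := h23
  refine ⟨R ○ Q, hR.comp hQ, fun s hs => ?_⟩
  obtain ⟨t, ht, hst⟩ := hRinit s hs
  obtain ⟨u, hu, htu⟩ := hQinit t ht
  exact ⟨u, hu, t, hst, htu⟩

lemma conj_refines_left (T1 T2 : NAA A) : (T1.conj T2).Refines T1 := by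
  refine ⟨{p | p.1.1 = p.2}, ?_, fun s hs => ⟨s.1, hs.1, rfl⟩⟩
  rintro ⟨⟨t, u⟩, _⟩ (rfl : t = _) M ⟨-, hM1, -⟩
  refine ⟨pi1 M, hM1, ?_, ?_⟩
  · rintro ⟨a, t', u'⟩ hq
    exact ⟨(a, t'), ⟨u', hq⟩, rfl, rfl⟩
  · rintro ⟨a, t'⟩ ⟨u', hq⟩
    exact ⟨(a, (t', u')), hq, rfl, rfl⟩

lemma conj_refines_right (T1 T2 : NAA A) : (T1.conj T2).Refines T2 := by
  refine ⟨{p | p.1.2 = p.2}, ?_, fun s hs => ⟨s.2, hs.2, rfl⟩⟩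
  rintro ⟨⟨t, u⟩, _⟩ (rfl : u = _) M ⟨-, -, hM2⟩
  refine ⟨pi2 M, hM2, ?_, ?_⟩
  · rintro ⟨a, t', u'⟩ hq
    exact ⟨(a, u'), ⟨t', hq⟩, rfl, rfl⟩
  · rintro ⟨a, u'⟩ ⟨t', hq⟩
    exact ⟨(a, (t', u')), hq, rfl, rfl⟩

lemma Refines.conj {T1 T2 T3 : NAA A} (h2 : T2.Wellformed) (h3 : T3.Wellformed)
    (r2 : T1.Refines T2) (r3 : T1.Refines T3) : T1.Refines (T2.conj T3) := by
  obtain ⟨R2, hR2, hinit2⟩ := r2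
  obtain ⟨R3, hR3, hinit3⟩ := r3
  refine ⟨{p | (p.1, p.2.1) ∈ R2 ∧ (p.1, p.2.2) ∈ R3}, ?_, fun s hs => ?_⟩
  · rintro ⟨s, t, u⟩ ⟨hst, hsu⟩ M1 hM1
    obtain ⟨M2, hM2, hm2⟩ := hR2 (s, t) hst M1 hM1
    obtain ⟨M3, hM3, hm3⟩ := hR3 (s, u) hsu M1 hM1
    refine ⟨syncProd R2 R3 M1 M2 M3, ⟨?_, ?_, ?_⟩, matched_syncProd hm2 hm3⟩
    · exact syncProd_finite (h2.2 t M2 hM2) (h3.2 u M3 hM3)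
    · rwa [pi1_syncProd hm2 hm3]
    · rwa [pi2_syncProd hm2 hm3]
  · obtain ⟨t, ht, hst⟩ := hinit2 s hs
    obtain ⟨u, hu, hsu⟩ := hinit3 s hs
    exact ⟨(t, u), ⟨ht, hu⟩, hst, hsu⟩

lemma refines_conj_iff {T1 T2 T3 : NAA A} (h2 : T2.Wellformed) (h3 : T3.Wellformed) :
    T1.Refines (T2.conj T3) ↔ T1.Refines T2 ∧ T1.Refines T3 :=
  ⟨fun h => ⟨h.trans (conj_refines_left T2 T3), h.trans (conj_refines_right T2 T3)⟩,
    fun h => h.1.conj h2 h3 h.2⟩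

lemma impl_conj {T1 T2 : NAA A} (h1 : T1.Wellformed) (h2 : T2.Wellformed) :
    (T1.conj T2).impl = T1.impl ∩ T2.impl :=
  Set.ext fun _ => refines_conj_iff h1 h2

end NAA

theorem statement11_general (A : Type) (S1 S2 S3 : NAA A)
    (h1 : S1.Wellformed) (h2 : S2.Wellformed) (h3 : S3.Wellformed) :
    (S1.conj S2).impl = S1.impl ∩ S2.impl ∧
    (S1.Refines (S2.conj S3) ↔ S1.Refines S2 ∧ S1.Refines S3) :=
  ⟨NAA.impl_conj h1 h2, NAA.refines_conj_iff h2 h3⟩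

/-- the implementations of a conjunction of NAA are the
intersection of the implementations, and conjunction is the greatest lower
bound with respect to modal refinement. -/
theorem statement11 (A : Type) [Fintype A] (S1 S2 S3 : NAA A)
    (h1 : S1.Wellformed) (h2 : S2.Wellformed) (h3 : S3.Wellformed) :
    (S1.conj S2).impl = S1.impl ∩ S2.impl ∧
    (S1.Refines (S2.conj S3) ↔ S1.Refines S2 ∧ S1.Refines S3) :=
  statement11_general A S1 S2 S3 h1 h2 h3
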